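/- In the Pa^c(σ,γ) model, the survival function of the maximum X_+ = max_{1≤i≤n} X_i is the alternating sum of the survival functions of sub-minima: for every x ≥ 0, ν{max_{1≤i≤n} X_i > x} = ∑_{∅ ≠ S ⊆ {1,…,n}} (−1)^{|S|−1} · ν{min_{i∈S} X_i > x} = ∑_{∅ ≠ S ⊆ {1,…,n}} (−1)^{|S|−1} · ∏_{j=1}^{n+1} (1 + x·∑_{i∈S} c_{i,j}/σ_i)^{−γ_j}. -/

import Mathlib

/-!
Given the gamma coordinates `y`, the event `X_i > x` is `λ_i > x (∑_j c_{i,j} y_j) / σ_i`, and the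
`λ_i` are independent standard exponentials, so `ν{min_{i∈S} X_i > x}` is the `y`-average of
`exp (-∑_j s_j y_j)` with `s_j = x ∑_{i∈S} c_{i,j} / σ_i`. By independence of the `y_j` this is a
product of gamma Laplace transforms `(1 + s_j)^{-γ_j}`. The first identity is inclusion–exclusion
for the union of the events `X_i > x`.
-/

open MeasureTheory ProbabilityTheory Real

/-- The `Pa^c(σ,γ)` model measure. -/
noncomputable def paretoModelMeasure (n : ℕ) (γ : Fin (n + 1) → ℝ) :
    Measure ((Fin n → ℝ) × (Fin (n + 1) → ℝ)) :=
  (Measure.pi fun _ : Fin n => gammaMeasure 1 1).prod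
    (Measure.pi fun j => gammaMeasure (γ j) 1)

/-- The coordinates `X_i(λ,y) = σ_i λ_i / ∑_j c_{i,j} y_j`. -/
noncomputable def paretoCoord (n : ℕ) (σ : Fin n → ℝ) (c : Fin n → Fin (n + 1) → ℝ)
    (i : Fin n) (p : (Fin n → ℝ) × (Fin (n + 1) → ℝ)) : ℝ :=
  σ i * p.1 i / ∑ j, c i j * p.2 j

lemma measureReal_exists_lt_eq_sum_powerset {Ω ι : Type*} [MeasurableSpace Ω] [Fintype ι]
    (μ : Measure Ω) [IsFiniteMeasure μ] {X : ι → Ω → ℝ} (hX : ∀ i, Measurable (X i)) (x : ℝ) :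
    μ.real {ω | ∃ i, x < X i ω}
      = ∑ S ∈ Finset.univ.powerset.filter Finset.Nonempty,
          (-1 : ℝ) ^ (S.card - 1) * μ.real {ω | ∀ i ∈ S, x < X i ω} := by
  have hunion : {ω | ∃ i, x < X i ω} = ⋃ i ∈ Finset.univ, {ω | x < X i ω} := by ext; simp
  rw [hunion, measureReal_biUnion_eq_sum_powerset
    fun i _ => measurableSet_lt measurable_const (hX i)]
  refine Finset.sum_congr rfl fun S hS => ?_
  obtain ⟨k, hk⟩ := Nat.exists_eq_add_one.2 (Finset.mem_filter.1 hS).2.card_pos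
  congr 1
  · rw [hk, Nat.add_sub_cancel, pow_succ, pow_succ, mul_assoc]; norm_num
  · congr 1; ext; simp

lemma ae_pos_gammaMeasure (a r : ℝ) : ∀ᵐ y ∂gammaMeasure a r, 0 < y := by
  have hpdf : Measurable (gammaPDF a r) := (measurable_gammaPDFReal a r).ennreal_ofReal
  rw [gammaMeasure, ae_withDensity_iff hpdf]
  filter_upwards [Measure.ae_ne volume 0] with y hy0 hy_pdf
  exact hy0.symm.lt_of_le (not_lt.1 fun hy => hy_pdf (gammaPDF_of_neg hy))

lemma expMeasure_Ioi {r t : ℝ} (hr : 0 < r) (ht : 0 ≤ t) :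
    expMeasure r (Set.Ioi t) = ENNReal.ofReal (exp (-(r * t))) := by
  have := isProbabilityMeasure_expMeasure hr
  rw [← Set.compl_Iic, prob_compl_eq_one_sub measurableSet_Iic, ← ofReal_cdf,
    cdf_expMeasure_eq hr, if_pos ht, ENNReal.ofReal_sub _ (exp_nonneg _), ENNReal.ofReal_one,
    ENNReal.sub_sub_cancel ENNReal.one_ne_top]
  exact ENNReal.ofReal_le_one.2 (exp_le_one_iff.2 (neg_nonpos.2 (by positivity)))

lemma lintegral_exp_neg_mul_gammaMeasure {a r s : ℝ} (ha : 0 < a) (hr : 0 < r) (hs : 0 ≤ s) :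
    ∫⁻ y, ENNReal.ofReal (exp (-(s * y))) ∂gammaMeasure a r
      = ENNReal.ofReal ((r / (r + s)) ^ a) := by
  have hrs : 0 < r + s := by linarith
  have hdensity : ∀ y, gammaPDF a r y * ENNReal.ofReal (exp (-(s * y)))
      = ENNReal.ofReal ((r / (r + s)) ^ a) * gammaPDF a (r + s) y := by
    intro y
    rcases lt_or_ge y 0 with hy | hy
    · simp [gammaPDF_of_neg hy]
    rw [gammaPDF_of_nonneg hy, gammaPDF_of_nonneg hy, ← ENNReal.ofReal_mul (by positivity),
      ← ENNReal.ofReal_mul (by positivity)]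
    congr 1
    have hpow : (r / (r + s)) ^ a * (r + s) ^ a = r ^ a := by
      rw [div_rpow hr.le hrs.le, div_mul_cancel₀ _ (rpow_pos_of_pos hrs a).ne']
    rw [← hpow, add_mul, neg_add, exp_add]
    ring
  have hpdf : Measurable (gammaPDF a r) := (measurable_gammaPDFReal a r).ennreal_ofReal
  rw [gammaMeasure, lintegral_withDensity_eq_lintegral_mul _ hpdf (by fun_prop)]
  simp only [Pi.mul_apply, hdensity]
  rw [lintegral_const_mul' _ _ ENNReal.ofReal_ne_top,
    lintegral_gammaPDF_eq_one ha hrs, mul_one]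

lemma lintegral_pi_prod_apply {ι : Type*} [Fintype ι] {μ : ι → Measure ℝ}
    [∀ i, IsProbabilityMeasure (μ i)] {f : ι → ℝ → ENNReal} (hf : ∀ i, Measurable (f i)) :
    ∫⁻ y, ∏ i, f i (y i) ∂Measure.pi μ = ∏ i, ∫⁻ t, f i t ∂μ i := by
  rw [lintegral_prod_eq_prod_lintegral_of_indepFun _ _
    (iIndepFun_pi fun i => (hf i).aemeasurable) fun i => (hf i).comp (measurable_pi_apply i)]
  exact Finset.prod_congr rfl fun i _ =>
    (measurePreserving_eval μ i).lintegral_comp (hf i)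

lemma lintegral_exp_neg_sum_mul_pi_gammaMeasure {ι : Type*} [Fintype ι] {a s : ι → ℝ}
    (ha : ∀ j, 0 < a j) (hs : ∀ j, 0 ≤ s j) :
    ∫⁻ y, ENNReal.ofReal (exp (-∑ j, s j * y j)) ∂Measure.pi (fun j => gammaMeasure (a j) 1)
      = ENNReal.ofReal (∏ j, (1 + s j) ^ (-a j)) := by
  have := fun j => isProbabilityMeasure_gammaMeasure (ha j) one_pos
  have hsplit : ∀ y : ι → ℝ, ENNReal.ofReal (exp (-∑ j, s j * y j))
      = ∏ j, ENNReal.ofReal (exp (-(s j * y j))) := fun y => by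
    rw [← Finset.sum_neg_distrib, exp_sum, ENNReal.ofReal_prod_of_nonneg fun j _ => exp_nonneg _]
  simp only [hsplit]
  rw [lintegral_pi_prod_apply (f := fun j t => ENNReal.ofReal (exp (-(s j * t))))
      fun j => by fun_prop,
    ENNReal.ofReal_prod_of_nonneg fun j _ => by have := hs j; positivity]
  refine Finset.prod_congr rfl fun j _ => ?_
  have h1s : 0 ≤ 1 + s j := by linarith [hs j]
  rw [lintegral_exp_neg_mul_gammaMeasure (ha j) one_pos (hs j), one_div, inv_rpow h1s,
    rpow_neg h1s]

lemma pi_expMeasure_setOf_forall_lt {ι : Type*} [Fintype ι] (S : Finset ι) {t : ι → ℝ}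
    (ht : ∀ i, 0 ≤ t i) :
    Measure.pi (fun _ : ι => expMeasure 1) {l | ∀ i ∈ S, t i < l i}
      = ENNReal.ofReal (exp (-∑ i ∈ S, t i)) := by
  classical
  have := isProbabilityMeasure_expMeasure (r := 1) one_pos
  have hbox : {l : ι → ℝ | ∀ i ∈ S, t i < l i}
      = Set.univ.pi fun i => if i ∈ S then Set.Ioi (t i) else Set.univ := by
    ext l; simp only [Set.mem_ofPred_eq, Set.mem_univ_pi]
    refine forall_congr' fun i => ?_
    split_ifs with hi <;> simp [hi]
  have hfactor : ∀ i, expMeasure 1 (if i ∈ S then Set.Ioi (t i) else Set.univ)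
      = if i ∈ S then ENNReal.ofReal (exp (-t i)) else 1 := fun i => by
    split_ifs
    · rw [expMeasure_Ioi one_pos (ht i), one_mul]
    · exact measure_univ
  rw [hbox, Measure.pi_pi, Finset.prod_congr rfl fun i _ => hfactor i, Finset.prod_ite_mem,
    Finset.univ_inter, ← ENNReal.ofReal_prod_of_nonneg fun i _ => exp_nonneg _, ← exp_sum,
    Finset.sum_neg_distrib]

lemma isProbabilityMeasure_paretoModelMeasure {n : ℕ} {γ : Fin (n + 1) → ℝ}
    (hγ : ∀ j, 0 < γ j) : IsProbabilityMeasure (paretoModelMeasure n γ) := by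
  have := fun j => isProbabilityMeasure_gammaMeasure (hγ j) one_pos
  have := isProbabilityMeasure_gammaMeasure (a := 1) (r := 1) one_pos one_pos
  unfold paretoModelMeasure
  infer_instance

lemma measurable_paretoCoord (n : ℕ) (σ : Fin n → ℝ) (c : Fin n → Fin (n + 1) → ℝ) (i : Fin n) :
    Measurable (paretoCoord n σ c i) := by
  unfold paretoCoord
  fun_prop

lemma preimage_setOf_forall_lt_paretoCoord {n : ℕ} {σ : Fin n → ℝ} (hσ : ∀ i, 0 < σ i)
    {c : Fin n → Fin (n + 1) → ℝ} {y : Fin (n + 1) → ℝ} (hy : ∀ i, 0 < ∑ j, c i j * y j)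
    (S : Finset (Fin n)) (x : ℝ) :
    (fun l => (l, y)) ⁻¹' {q | ∀ i ∈ S, x < paretoCoord n σ c i q}
      = {l | ∀ i ∈ S, x * (∑ j, c i j * y j) / σ i < l i} := by
  ext l
  simp only [Set.mem_preimage, Set.mem_ofPred_eq, paretoCoord]
  refine forall₂_congr fun i _ => ?_
  rw [lt_div_iff₀ (hy i), div_lt_iff₀ (hσ i), mul_comm (σ i)]

lemma measureReal_paretoModelMeasure_setOf_forall_lt {n : ℕ} {σ : Fin n → ℝ} (hσ : ∀ i, 0 < σ i)
    {γ : Fin (n + 1) → ℝ} (hγ : ∀ j, 0 < γ j) {c : Fin n → Fin (n + 1) → ℝ}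
    (hc : ∀ i j, 0 ≤ c i j) (hrow : ∀ i, ∃ j, 0 < c i j) {x : ℝ} (hx : 0 ≤ x)
    (S : Finset (Fin n)) :
    (paretoModelMeasure n γ).real {q | ∀ i ∈ S, x < paretoCoord n σ c i q}
      = ∏ j, (1 + x * ∑ i ∈ S, c i j / σ i) ^ (-γ j) := by
  have := fun j => isProbabilityMeasure_gammaMeasure (hγ j) one_pos
  have := isProbabilityMeasure_gammaMeasure (a := 1) (r := 1) one_pos one_pos
  have hmeas : MeasurableSet {q | ∀ i ∈ S, x < paretoCoord n σ c i q} := by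
    simp only [Set.ofPred_forall]
    exact .iInter fun i => .iInter fun _ =>
      measurableSet_lt measurable_const (measurable_paretoCoord n σ c i)
  have hpos : ∀ᵐ y ∂Measure.pi fun j => gammaMeasure (γ j) 1, ∀ i, 0 < ∑ j, c i j * y j := by
    filter_upwards [ae_all_iff.2 fun j =>
      Measure.tendsto_eval_ae_ae.eventually (ae_pos_gammaMeasure (γ j) 1)] with y hy i
    obtain ⟨j, hj⟩ := hrow i
    exact Finset.sum_pos' (fun j _ => mul_nonneg (hc i j) (hy j).le)
      ⟨j, Finset.mem_univ j, mul_pos hj (hy j)⟩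
  have hs : ∀ j, 0 ≤ x * ∑ i ∈ S, c i j / σ i := fun j =>
    mul_nonneg hx (Finset.sum_nonneg fun i _ => div_nonneg (hc i j) (hσ i).le)
  have hswap : ∀ y : Fin (n + 1) → ℝ, ∑ i ∈ S, x * (∑ j, c i j * y j) / σ i
      = ∑ j, (x * ∑ i ∈ S, c i j / σ i) * y j := fun y => by
    simp only [Finset.mul_sum, Finset.sum_mul, Finset.sum_div]
    rw [Finset.sum_comm]
    exact Finset.sum_congr rfl fun j _ => Finset.sum_congr rfl fun i _ => by ring
  rw [measureReal_def, ← ENNReal.toReal_ofReal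
    (Finset.prod_nonneg fun j _ => rpow_nonneg (by linarith [hs j]) _)]
  congr 1
  rw [paretoModelMeasure, Measure.prod_apply_symm hmeas,
    ← lintegral_exp_neg_sum_mul_pi_gammaMeasure hγ hs]
  refine lintegral_congr_ae (hpos.mono fun y hy => ?_)
  dsimp only
  rw [preimage_setOf_forall_lt_paretoCoord hσ hy, ← hswap]
  exact pi_expMeasure_setOf_forall_lt S fun i => div_nonneg (mul_nonneg hx (hy i).le) (hσ i).le

theorem maximum_survival_inclusion_exclusion_general
    (n : ℕ)
    (σ : Fin n → ℝ) (hσ : ∀ i, 0 < σ i)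
    (γ : Fin (n + 1) → ℝ) (hγ : ∀ j, 0 < γ j)
    (c : Fin n → Fin (n + 1) → ℝ) (hc : ∀ i j, c i j = 0 ∨ c i j = 1)
    (hrow : ∀ i, ∃ j, c i j = 1)
    (x : ℝ) (hx : 0 ≤ x) :
    (paretoModelMeasure n γ {q | ∃ i, x < paretoCoord n σ c i q}).toReal
        = ∑ S ∈ Finset.univ.powerset.filter Finset.Nonempty,
            (-1 : ℝ) ^ (S.card - 1)
              * (paretoModelMeasure n γ {q | ∀ i ∈ S, x < paretoCoord n σ c i q}).toReal
      ∧ (paretoModelMeasure n γ {q | ∃ i, x < paretoCoord n σ c i q}).toReal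
          = ∑ S ∈ Finset.univ.powerset.filter Finset.Nonempty,
              (-1 : ℝ) ^ (S.card - 1)
                * ∏ j, (1 + x * ∑ i ∈ S, c i j / σ i) ^ (-(γ j)) := by
  have := isProbabilityMeasure_paretoModelMeasure hγ
  have hc_nonneg : ∀ i j, 0 ≤ c i j := fun i j => by rcases hc i j with h | h <;> simp [h]
  have hrow_pos : ∀ i, ∃ j, 0 < c i j := fun i => (hrow i).imp fun j hj => by simp [hj]
  have hmax := measureReal_exists_lt_eq_sum_powerset (paretoModelMeasure n γ)
    (measurable_paretoCoord n σ c) x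
  refine ⟨hmax, hmax.trans (Finset.sum_congr rfl fun S _ => ?_)⟩
  rw [measureReal_paretoModelMeasure_setOf_forall_lt hσ hγ hc_nonneg hrow_pos hx S]

/-- inclusion–exclusion for the survival function of the maximum:
`ν{max_i X_i > x} = ∑_{∅≠S} (-1)^{|S|-1} ν{min_{i∈S} X_i > x}
                  = ∑_{∅≠S} (-1)^{|S|-1} ∏_j (1 + x ∑_{i∈S} c_{i,j}/σ_i)^{-γ_j}`. -/
theorem maximum_survival_inclusion_exclusion
    (n : ℕ) (hn : 1 ≤ n)
    (σ : Fin n → ℝ) (hσ : ∀ i, 0 < σ i)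
    (γ : Fin (n + 1) → ℝ) (hγ : ∀ j, 0 < γ j)
    (c : Fin n → Fin (n + 1) → ℝ) (hc : ∀ i j, c i j = 0 ∨ c i j = 1)
    (hrow : ∀ i, ∃ j, c i j = 1)
    (x : ℝ) (hx : 0 ≤ x) :
    (paretoModelMeasure n γ {q | ∃ i, x < paretoCoord n σ c i q}).toReal
        = ∑ S ∈ Finset.univ.powerset.filter Finset.Nonempty,
            (-1 : ℝ) ^ (S.card - 1)
              * (paretoModelMeasure n γ {q | ∀ i ∈ S, x < paretoCoord n σ c i q}).toReal
      ∧ (paretoModelMeasure n γ {q | ∃ i, x < paretoCoord n σ c i q}).toReal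
          = ∑ S ∈ Finset.univ.powerset.filter Finset.Nonempty,
              (-1 : ℝ) ^ (S.card - 1)
                * ∏ j, (1 + x * ∑ i ∈ S, c i j / σ i) ^ (-(γ j)) :=
  maximum_survival_inclusion_exclusion_general n σ hσ γ hγ c hc hrow x hx
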